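/- In an interference-limited single-tier network, the peak UE ergodic rate E[R] = Σ_{i=1}^M q(α_i) B_i does not depend on the BS density λ or the transmit powers {P_i}, where q(α) = ∫₀^∞ 1/((1+t)(1 + ρ(t,α,1))) dt. -/

import Mathlib

/-! The nearest-BS distance `r` has density `2πλr e^{-πλr²}`, so averaging the interference
factor `e^{-πλρr²}` over `r` is a Laplace transform in `πλr²`: it gives `1/(1 + ρ)`, in which
`λ` has cancelled. Without noise the transmit power never enters. -/

open MeasureTheory Set

/-- `ρ(t, α, β) = ∫₁^∞ t/(t + β x^{α/2}) dx`. -/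
noncomputable def rho (t α β : ℝ) : ℝ := ∫ x in Ioi (1 : ℝ), t / (t + β * x ^ (α / 2))

/-- `q(α) = ∫₀^∞ 1/((1+t)(1 + ρ(t, α, 1))) dt`. -/
noncomputable def q (α : ℝ) : ℝ := ∫ t in Ioi (0 : ℝ), 1 / ((1 + t) * (1 + rho t α 1))

open Real

lemma rho_nonneg {t β : ℝ} (α : ℝ) (ht : 0 ≤ t) (hβ : 0 ≤ β) : 0 ≤ rho t α β :=
  setIntegral_nonneg measurableSet_Ioi fun x hx =>
    have : 0 ≤ x ^ (α / 2) := rpow_nonneg (zero_le_one.trans (le_of_lt hx)) _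
    by positivity

lemma integral_Ioi_mul_exp_neg_mul_sq {b : ℝ} (hb : 0 < b) :
    ∫ r in Ioi (0 : ℝ), r * exp (-(b * r ^ 2)) = (2 * b)⁻¹ := by
  have h := integral_rpow_mul_exp_neg_mul_rpow two_pos (neg_one_lt_zero.trans one_pos) hb
  simp only [rpow_one, rpow_ofNat, neg_mul, neg_div, add_self_div_two, Gamma_one, mul_one,
    rpow_neg_one] at h
  rw [h, mul_inv, one_div, mul_comm]

lemma integral_nearest_density_mul_exp_neg {lam c : ℝ} (hlam : 0 < lam) (hc : -1 < c) :
    ∫ r in Ioi (0 : ℝ), 2 * π * lam * r * exp (-(π * lam * c * r ^ 2))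
      * exp (-(π * lam * r ^ 2)) = 1 / (1 + c) := by
  have hb : 0 < π * lam * (1 + c) := mul_pos (mul_pos pi_pos hlam) (by linarith)
  calc _ = ∫ r in Ioi (0 : ℝ), 2 * π * lam * (r * exp (-(π * lam * (1 + c) * r ^ 2))) := by
        refine integral_congr_ae (ae_of_all _ fun r => ?_)
        dsimp only
        rw [mul_assoc _ (exp _), ← exp_add]
        ring_nf
    _ = 1 / (1 + c) := by
        rw [integral_const_mul, integral_Ioi_mul_exp_neg_mul_sq hb]
        field_simp

theorem stmt12_general (M : ℕ) (B α P : Fin M → ℝ)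
    (lam : ℝ) (hlam : 0 < lam) :
    (∑ i, B i * ∫ t in Ioi (0 : ℝ), ∫ r in Ioi (0 : ℝ),
        (2 * Real.pi * lam * r / (1 + t))
          * Real.exp (-((0 : ℝ) * t * r ^ (α i) / P i))
          * Real.exp (-(Real.pi * lam * rho t (α i) 1 * r ^ 2))
          * Real.exp (-(Real.pi * lam * r ^ 2)))
      = ∑ i, q (α i) * B i := by
  refine Finset.sum_congr rfl fun i _ => ?_
  rw [mul_comm (q (α i))]
  congr 1
  refine setIntegral_congr_fun measurableSet_Ioi fun t (ht : 0 < t) => ?_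
  have hrho : -1 < rho t (α i) 1 := neg_one_lt_zero.trans_le (rho_nonneg _ ht.le zero_le_one)
  calc _ = ∫ r in Ioi (0 : ℝ), (1 + t)⁻¹ * (2 * π * lam * r
          * exp (-(π * lam * rho t (α i) 1 * r ^ 2)) * exp (-(π * lam * r ^ 2))) := by
        refine integral_congr_ae (ae_of_all _ fun r => ?_)
        simp only [zero_mul, zero_div, neg_zero, exp_zero, mul_one]
        ring
    _ = 1 / ((1 + t) * (1 + rho t (α i) 1)) := by
        rw [integral_const_mul, integral_nearest_density_mul_exp_neg hlam hrho, inv_eq_one_div,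
          one_div_mul_one_div]

/-- In an interference-limited (noise `w = 0`) fully-loaded single-tier network, the peak
UE ergodic rate equals `Σᵢ q(αᵢ) Bᵢ`, which depends on neither the BS density `λ` nor the
transmit powers `Pᵢ`. -/
theorem stmt12 (M : ℕ) (B α P : Fin M → ℝ)
    (hB : ∀ i, 0 < B i) (hα : ∀ i, 2 < α i) (hP : ∀ i, 0 < P i)
    (lam : ℝ) (hlam : 0 < lam) :
    (∑ i, B i * ∫ t in Ioi (0 : ℝ), ∫ r in Ioi (0 : ℝ),
        (2 * Real.pi * lam * r / (1 + t))
          * Real.exp (-((0 : ℝ) * t * r ^ (α i) / P i))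
          * Real.exp (-(Real.pi * lam * rho t (α i) 1 * r ^ 2))
          * Real.exp (-(Real.pi * lam * r ^ 2)))
      = ∑ i, q (α i) * B i :=
  stmt12_general M B α P lam hlam
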